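/- For any finite graph G and any disjoint vertex sets S, T ⊆ V(G), the quantity δ_G(S,T) := 2|S| + Σ_{v∈T} deg_{G−S}(v) − 2|T| − h_G(S,T) is even, where h_G(S,T) is the number of components C of G − (S ∪ T) with e_G(C,T) odd. -/

import Mathlib

/-!
With `U = V − (S ∪ T)`, the sum `Σ_{v∈T} deg_{G−S}(v)` counts the ordered pairs of adjacent
vertices inside `T`, an even number, plus `e(T, U)`. The latter is the sum of `e(C, T)` over the
components `C` of `G[U]`, and a sum of natural numbers has the parity of its number of odd terms.
-/

open SimpleGraph

namespace VizingTwoFactor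

variable {V : Type*}

/-- The degree of a vertex, as the `ncard` of its neighbor set. -/
noncomputable def ndeg (G : SimpleGraph V) (v : V) : ℕ :=
  (G.neighborSet v).ncard

/-- `G` is bipartite with parts `X` and `T`. -/
def IsBipartiteWith (G : SimpleGraph V) (X T : Set V) : Prop :=
  Disjoint X T ∧ ∀ u v : V, G.Adj u v → (u ∈ X ∧ v ∈ T) ∨ (u ∈ T ∧ v ∈ X)

/-- The set of neighbors of a set of vertices. -/
def NSet (G : SimpleGraph V) (A : Set V) : Set V :=
  {v | ∃ a ∈ A, G.Adj a v}

/-- `G` has a matching saturating the vertex set `T`. -/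
def HasMatchingSaturating (G : SimpleGraph V) (T : Set V) : Prop :=
  ∃ M : G.Subgraph, M.IsMatching ∧ T ⊆ M.verts

/-- Number of (ordered) adjacent pairs with first coordinate in `A` and second in `B`;
for disjoint `A`, `B` this is the number of edges between `A` and `B`. -/
noncomputable def eBetween (G : SimpleGraph V) (A B : Set V) : ℕ :=
  {p : V × V | p.1 ∈ A ∧ p.2 ∈ B ∧ G.Adj p.1 p.2}.ncard

/-- Number of neighbors of `v` inside `A`. -/
noncomputable def degIn (G : SimpleGraph V) (A : Set V) (v : V) : ℕ :=
  (G.neighborSet v ∩ A).ncard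

/-- The vertex set (in `V`) of a connected component of an induced subgraph. -/
def csupp (G : SimpleGraph V) (U : Set V) (C : (G.induce U).ConnectedComponent) : Set V :=
  Subtype.val '' C.supp

/-- The odd components of `G − (S ∪ T)` w.r.t. `(S,T)`: components sending an odd
number of edges to `T`. -/
noncomputable def oddComps (G : SimpleGraph V) (S T : Set V) :
    Set ((G.induce (S ∪ T)ᶜ).ConnectedComponent) :=
  {C | Odd (eBetween G (csupp G (S ∪ T)ᶜ C) T)}

/-- `h_G(S,T)`: the number of odd components. -/
noncomputable def hNum (G : SimpleGraph V) (S T : Set V) : ℕ :=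
  (oddComps G S T).ncard

/-- `δ_G(S,T) = 2|S| + Σ_{v∈T} deg_{G−S}(v) − 2|T| − h_G(S,T)`. -/
noncomputable def deltaST (G : SimpleGraph V) (S T : Set V) : ℤ :=
  2 * S.ncard + (∑ᶠ v ∈ T, (degIn G Sᶜ v : ℤ)) - 2 * T.ncard - hNum G S T

/-- A barrier. -/
def IsBarrier (G : SimpleGraph V) (S T : Set V) : Prop :=
  Disjoint S T ∧ deltaST G S T ≤ -2

/-- A minimum barrier: minimizes `|S ∪ T|` among barriers. -/
def IsMinBarrier (G : SimpleGraph V) (S T : Set V) : Prop :=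
  IsBarrier G S T ∧ ∀ S' T' : Set V, IsBarrier G S' T' → (S ∪ T).ncard ≤ (S' ∪ T').ncard

/-- `G` has a 2-factor: a spanning subgraph in which every vertex has degree 2. -/
def HasTwoFactor (G : SimpleGraph V) : Prop :=
  ∃ H : SimpleGraph V, H ≤ G ∧ ∀ v : V, ndeg H v = 2

/-- `G` has a proper edge coloring with `k` colors. -/
def HasEdgeColoring (G : SimpleGraph V) (k : ℕ) : Prop :=
  ∃ f : G.edgeSet → Fin k, ∀ e₁ e₂ : G.edgeSet, e₁ ≠ e₂ →
    (∃ v : V, v ∈ (e₁ : Sym2 V) ∧ v ∈ (e₂ : Sym2 V)) → f e₁ ≠ f e₂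

/-- The chromatic index `χ'(G)`. -/
noncomputable def chromIdx (G : SimpleGraph V) : ℕ :=
  sInf {k | HasEdgeColoring G k}

/-- `Δ` is the maximum degree of `G`. -/
def IsMaxDegree (G : SimpleGraph V) (Δ : ℕ) : Prop :=
  (∀ v : V, ndeg G v ≤ Δ) ∧ ∃ v : V, ndeg G v = Δ

/-- `G` is `Δ`-critical: no isolated vertices, maximum degree `Δ`, `χ'(G) = Δ + 1`, and
`χ'(G − e) = Δ` for every edge `e`. -/
def IsDeltaCritical (G : SimpleGraph V) (Δ : ℕ) : Prop :=
  (∀ v : V, ∃ u : V, G.Adj v u) ∧ IsMaxDegree G Δ ∧ chromIdx G = Δ + 1 ∧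
    ∀ e ∈ G.edgeSet, chromIdx (G.deleteEdges {e}) = Δ

/-- `T` is an independent set in `G`. -/
def IsIndep (G : SimpleGraph V) (T : Set V) : Prop :=
  ∀ u ∈ T, ∀ v ∈ T, ¬ G.Adj u v

/-- The bipartite graph `H*` consisting of the edges of `G` between `V(G) \ T` and `T`. -/
def betweenGraph (G : SimpleGraph V) (T : Set V) : SimpleGraph V where
  Adj u v := G.Adj u v ∧ ((u ∉ T ∧ v ∈ T) ∨ (u ∈ T ∧ v ∉ T))
  symm := ⟨fun u v h => ⟨h.1.symm, h.2.elim (fun h' => Or.inr ⟨h'.2, h'.1⟩)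
    (fun h' => Or.inl ⟨h'.2, h'.1⟩)⟩⟩
  loopless := ⟨fun u h => G.loopless.1 u h.1⟩

lemma even_finsum_iff_even_ncard_odd {ι : Type*} [Finite ι] (f : ι → ℕ) :
    Even (∑ᶠ i, f i) ↔ Even {i | Odd (f i)}.ncard := by
  classical
  have := Fintype.ofFinite ι
  rw [finsum_eq_sum_of_fintype, Finset.even_sum_iff_even_card_odd, Set.ncard_eq_toFinset_card',
    Set.toFinset_ofPred]

section EdgeCounts

variable (G : SimpleGraph V)

lemma eBetween_comm (A B : Set V) : eBetween G A B = eBetween G B A := by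
  refine Set.ncard_congr (fun p _ => p.swap) ?_ (fun p q _ _ => Prod.swap_injective.eq_iff.mp) ?_
  · rintro ⟨_, _⟩ ⟨hu, hv, huv⟩
    exact ⟨hv, hu, huv.symm⟩
  · rintro ⟨u, v⟩ ⟨hu, hv, huv⟩
    exact ⟨(v, u), ⟨hv, hu, huv.symm⟩, rfl⟩

variable [Finite V]

lemma eBetween_union_right {A B C : Set V} (hBC : Disjoint B C) :
    eBetween G A (B ∪ C) = eBetween G A B + eBetween G A C := by
  rw [eBetween, eBetween, eBetween, ← Set.ncard_union_eq _ (Set.toFinite _) (Set.toFinite _)]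
  · congr 1
    ext p
    simp only [Set.mem_ofPred_eq, Set.mem_union]
    tauto
  · exact Set.disjoint_left.mpr fun p hB hC => hBC.notMem_of_mem_left hB.2.1 hC.2.1

lemma eBetween_iUnion_left {ι : Type*} [Finite ι] {A : ι → Set V}
    (hA : Pairwise (Function.onFun Disjoint A)) (B : Set V) :
    eBetween G (⋃ i, A i) B = ∑ᶠ i, eBetween G (A i) B := by
  simp only [eBetween]
  rw [← Set.ncard_iUnion_of_finite (fun _ => Set.toFinite _)]
  · congr 1
    ext p
    simp only [Set.mem_ofPred_eq, Set.mem_iUnion]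
    tauto
  · exact fun i j hij => Set.disjoint_left.mpr fun p hi hj => (hA hij).notMem_of_mem_left hi.1 hj.1

lemma eBetween_eq_finsum_degIn (A B : Set V) : eBetween G A B = ∑ᶠ v ∈ A, degIn G B v := by
  have hpairs : {p : V × V | p.1 ∈ A ∧ p.2 ∈ B ∧ G.Adj p.1 p.2}
      = ⋃ v ∈ A, Prod.mk v '' (G.neighborSet v ∩ B) := by
    ext ⟨u, w⟩
    simp only [Set.mem_ofPred_eq, Set.mem_iUnion, Set.mem_image, Set.mem_inter_iff,
      mem_neighborSet, Prod.mk.injEq]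
    constructor
    · rintro ⟨hu, hw, huw⟩
      exact ⟨u, hu, w, ⟨huw, hw⟩, rfl, rfl⟩
    · rintro ⟨u, hu, w, ⟨huw, hw⟩, rfl, rfl⟩
      exact ⟨hu, hw, huw⟩
  rw [eBetween, hpairs, Set.Finite.ncard_biUnion (Set.toFinite _) (fun _ _ => Set.toFinite _)]
  · exact finsum_mem_congr rfl fun v _ =>
      Set.ncard_image_of_injective _ (Prod.mk_right_injective v)
  · intro v _ w _ hvw
    exact Set.disjoint_left.mpr fun p ⟨_, _, hv⟩ ⟨_, _, hw⟩ =>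
      hvw (congrArg Prod.fst (hv.trans hw.symm))

lemma even_eBetween_self (A : Set V) : Even (eBetween G A A) := by
  classical
  have := Fintype.ofFinite V
  let H := ((⊤ : G.Subgraph).induce A).spanningCoe
  have hH : eBetween G A A = 2 * H.edgeFinset.card := by
    rw [two_mul_card_edgeFinset, eBetween, Set.ncard_eq_toFinset_card', Set.toFinset_ofPred]
    simp [H]
  exact hH ▸ even_two_mul _

lemma eBetween_eq_finsum_components (U B : Set V) :
    eBetween G U B = ∑ᶠ C : (G.induce U).ConnectedComponent, eBetween G (csupp G U C) B := by
  have hU : ⋃ C, csupp G U C = U := by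
    simp only [csupp, ← Set.image_iUnion, iUnion_connectedComponentSupp, Set.image_univ,
      Subtype.range_coe]
  rw [← eBetween_iUnion_left, hU]
  exact fun C D hCD => (Set.disjoint_image_iff Subtype.val_injective).mpr
    (pairwise_disjoint_supp_connectedComponent _ hCD)

lemma even_finsum_degIn_compl_iff {S T : Set V} (hST : Disjoint S T) :
    Even (∑ᶠ v ∈ T, degIn G Sᶜ v) ↔ Even (hNum G S T) := by
  have hSc : Sᶜ = T ∪ (S ∪ T)ᶜ := by
    rw [Set.compl_union, Set.union_inter_distrib_left, Set.union_compl_self, Set.inter_univ,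
      Set.union_eq_right.mpr (Set.subset_compl_iff_disjoint_left.mpr hST)]
  have hT : Disjoint T (S ∪ T)ᶜ :=
    Set.disjoint_compl_right_iff_subset.mpr Set.subset_union_right
  rw [← eBetween_eq_finsum_degIn, hSc, eBetween_union_right G hT, Nat.even_add,
    eBetween_comm G T (S ∪ T)ᶜ, eBetween_eq_finsum_components G (S ∪ T)ᶜ T,
    even_finsum_iff_even_ncard_odd]
  exact iff_true_left (even_eBetween_self G T)

end EdgeCounts

theorem vizing_stmt_5 [Fintype V] (G : SimpleGraph V) (S T : Set V)
    (hdisj : Disjoint S T) : Even (deltaST G S T) := by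
  have hparity : Even ((∑ᶠ v ∈ T, degIn G Sᶜ v : ℕ) - (hNum G S T : ℤ)) := by
    rw [Int.even_sub, Int.even_coe_nat, Int.even_coe_nat]
    exact even_finsum_degIn_compl_iff G hdisj
  have hdelta : deltaST G S T = 2 * ((S.ncard : ℤ) - T.ncard)
      + ((∑ᶠ v ∈ T, degIn G Sᶜ v : ℕ) - (hNum G S T : ℤ)) := by
    rw [deltaST, ← Nat.cast_finsum_mem T.toFinite]
    ring
  rw [hdelta]
  exact (even_two_mul _).add hparity

end VizingTwoFactor
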